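/- arXiv:1903.01305 — 6 statements merged into one kernel-verified Lean document; each statement's English description precedes it below -/
import Mathlib

section
/- For α ∈ (0,1/2), the kernel h(θ) = sin(θ)/|θ|_o^{2α} is (1-2α)-Hölder continuous on the torus: for all θ₁, θ₂ ∈ ℝ with θ₁ - θ₂ ∈ (-π, π], |h(θ₁) - h(θ₂)| ≤ cosh(π) · |θ₁ - θ₂|^{1-2α}. -/
/-
On `(-π, π]` the kernel is `g(x) = sin x / |x|^{2α}`, and `|g x| ≤ |x|^{1-2α}`. For `d = |x - y|`
with `|y| ≤ |x|`: if `|x| ≤ d` both values are at most `d^{1-2α}`; otherwise split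
`g x - g y = (sin x - sin y)/|x|^{2α} - sin y (|y|^{-2α} - |x|^{-2α})`, and each term is at most
`d / |x|^{2α} ≤ d^{1-2α}`. On the torus, two nearby points whose representatives do not differ by
`θ₁ - θ₂` sit on both sides of `±π`, where `|g| ≤ |sin| ≤ π - |x|` is small, and two far-apart
points are handled by `|g| ≤ π` and `2π ≤ cosh π`.
-/

/-- Representative of `θ` modulo `2π` in the interval `(-π, π]`. -/
noncomputable def rep (θ : ℝ) : ℝ := toIocMod Real.two_pi_pos (-Real.pi) θ

/-- Orthodromic distance `|θ|_o` of `e^{iθ}` to `1` on the unit circle. -/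
noncomputable def ortho (θ : ℝ) : ℝ := |rep θ|

/-- The singular Kuramoto kernel `h(θ) = sin θ / |θ|_o^{2α}` (with value `0` on `2πℤ`). -/
noncomputable def hker (α θ : ℝ) : ℝ := Real.sin θ / (ortho θ) ^ (2 * α)

open Real

lemma two_pi_le_cosh_pi : 2 * π ≤ cosh π := by
  have hexp := sum_le_exp_of_nonneg pi_pos.le 4
  simp only [Finset.sum_range_succ, Finset.sum_range_zero] at hexp
  norm_num [Nat.factorial] at hexp
  rw [cosh_eq]
  nlinarith [exp_pos (-π), pi_gt_three]

lemma rpow_self_div {a : ℝ} (ha : 0 < a) (p : ℝ) : a / a ^ p = a ^ (1 - p) := by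
  rw [rpow_sub ha, rpow_one]

lemma div_rpow_le_rpow_one_sub {d a p : ℝ} (hd : 0 ≤ d) (hda : d ≤ a) (hp : 0 ≤ p) :
    d / a ^ p ≤ d ^ (1 - p) := by
  rcases hd.eq_or_lt with rfl | hd
  · simpa using rpow_nonneg le_rfl _
  calc d / a ^ p ≤ d / d ^ p := div_le_div_of_nonneg_left hd.le (rpow_pos_of_pos hd _)
        (rpow_le_rpow hd.le hda hp)
    _ = d ^ (1 - p) := rpow_self_div hd p

noncomputable def sinKernel (α x : ℝ) : ℝ := sin x / |x| ^ (2 * α)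

lemma hker_eq_sinKernel_rep (α θ : ℝ) : hker α θ = sinKernel α (rep θ) := by
  rw [hker, sinKernel, ortho, rep, toIocMod, zsmul_eq_mul, sin_sub_int_mul_two_pi]

lemma abs_rep_le_pi (θ : ℝ) : |rep θ| ≤ π := by
  obtain ⟨hlo, hhi⟩ : rep θ ∈ Set.Ioc (-π) (-π + 2 * π) := toIocMod_mem_Ioc _ _ _
  exact abs_le.mpr ⟨hlo.le, by linarith⟩

-- Representatives that do not differ by `θ₁ - θ₂` lie on opposite sides of the cut at `±π`.
lemma rep_sub_rep_eq_or_pi_sub_add_pi_sub_le (θ₁ θ₂ : ℝ) :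
    rep θ₁ - rep θ₂ = θ₁ - θ₂ ∨ (π - |rep θ₁|) + (π - |rep θ₂|) ≤ |θ₁ - θ₂| := by
  obtain ⟨k, hk⟩ : ∃ k : ℤ, rep θ₁ - rep θ₂ = θ₁ - θ₂ + k * (2 * π) :=
    ⟨toIocDiv two_pi_pos (-π) θ₂ - toIocDiv two_pi_pos (-π) θ₁, by
      simp only [rep, toIocMod, zsmul_eq_mul]; push_cast; ring⟩
  rcases eq_or_ne k 0 with rfl | hk0
  · left; simpa using hk
  right
  have hk1 : (1 : ℝ) ≤ |(k : ℝ)| := by exact_mod_cast Int.one_le_abs hk0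
  have hshift : 2 * π ≤ |(k : ℝ) * (2 * π)| := by
    rw [abs_mul, abs_of_pos two_pi_pos]; nlinarith [pi_pos]
  have hshift' : |(k : ℝ) * (2 * π)| ≤ |rep θ₁ - rep θ₂| + |θ₁ - θ₂| := by
    simpa [hk] using abs_sub (rep θ₁ - rep θ₂) (θ₁ - θ₂)
  linarith [abs_sub (rep θ₁) (rep θ₂)]

variable {α : ℝ}

lemma abs_sinKernel_le_rpow (x : ℝ) : |sinKernel α x| ≤ |x| ^ (1 - 2 * α) := by
  rcases eq_or_ne x 0 with rfl | hx
  · simpa [sinKernel] using rpow_nonneg le_rfl _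
  have hx0 : 0 < |x| := abs_pos.mpr hx
  rw [sinKernel, abs_div, abs_of_nonneg (rpow_nonneg hx0.le _), rpow_sub hx0, rpow_one]
  exact div_le_div_of_nonneg_right abs_sin_le_abs (rpow_nonneg hx0.le _)

lemma abs_sinKernel_le_pi_sub (hα : 0 ≤ α) {x : ℝ} (hx1 : 1 ≤ |x|) (hxπ : |x| ≤ π) :
    |sinKernel α x| ≤ π - |x| := by
  have hX : 1 ≤ |x| ^ (2 * α) := one_le_rpow hx1 (by linarith)
  rw [sinKernel, abs_div, abs_of_nonneg (rpow_nonneg (abs_nonneg x) _)]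
  calc |sin x| / |x| ^ (2 * α) ≤ |sin x| := div_le_self (abs_nonneg _) hX
    _ = sin (π - |x|) := by rw [sin_pi_sub, abs_sin_eq_sin_abs_of_abs_le_pi hxπ]
    _ ≤ π - |x| := sin_le (by linarith)

lemma abs_sinKernel_sub_le_of_abs_le (hα0 : 0 ≤ α) (hα1 : 2 * α < 1) {x y : ℝ}
    (hyx : |y| ≤ |x|) :
    |sinKernel α x - sinKernel α y| ≤ 2 * |x - y| ^ (1 - 2 * α) := by
  set d := |x - y|
  have hxy : |x| - |y| ≤ d := abs_sub_abs_le_abs_sub x y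
  rcases le_or_gt |x| d with hxd | hdx
  · have hpow : ∀ z : ℝ, |z| ≤ d → |z| ^ (1 - 2 * α) ≤ d ^ (1 - 2 * α) := fun z hz =>
      rpow_le_rpow (abs_nonneg z) hz (by linarith)
    calc |sinKernel α x - sinKernel α y| ≤ |sinKernel α x| + |sinKernel α y| := abs_sub _ _
      _ ≤ |x| ^ (1 - 2 * α) + |y| ^ (1 - 2 * α) :=
          add_le_add (abs_sinKernel_le_rpow x) (abs_sinKernel_le_rpow y)
      _ ≤ 2 * d ^ (1 - 2 * α) := by linarith [hpow x hxd, hpow y (hyx.trans hxd)]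
  have hy0 : 0 < |y| := by linarith [abs_nonneg (x - y)]
  have hx0 : 0 < |x| := hy0.trans_le hyx
  set X := |x| ^ (2 * α)
  set Y := |y| ^ (2 * α)
  have hX : 0 < X := rpow_pos_of_pos hx0 _
  have hY : 0 < Y := rpow_pos_of_pos hy0 _
  have hYX : Y ≤ X := rpow_le_rpow hy0.le hyx (by linarith)
  have hdX : d / X ≤ d ^ (1 - 2 * α) :=
    div_rpow_le_rpow_one_sub (abs_nonneg _) hdx.le (by linarith)
  have hsplit : sinKernel α x - sinKernel α y = (sin x - sin y) / X - sin y * (1 / Y - 1 / X) := by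
    simp only [sinKernel, X, Y]; field_simp; ring
  have hfirst : |(sin x - sin y) / X| ≤ d / X := by
    rw [abs_div, abs_of_pos hX]; exact div_le_div_of_nonneg_right (abs_sin_sub_sin_le x y) hX.le
  -- `|y| / Y = |y| ^ (1 - 2α)` is monotone in `|y|`, so this term is at most `(|x| - |y|) / X`.
  have hsecond : |sin y * (1 / Y - 1 / X)| ≤ d / X := by
    have hinv : 0 ≤ 1 / Y - 1 / X := sub_nonneg.mpr (one_div_le_one_div_of_le hY hYX)
    have hmono : |y| / Y ≤ |x| / X := by
      rw [rpow_self_div hx0, rpow_self_div hy0]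
      exact rpow_le_rpow hy0.le hyx (by linarith)
    rw [abs_mul, abs_of_nonneg hinv]
    calc |sin y| * (1 / Y - 1 / X) ≤ |y| * (1 / Y - 1 / X) :=
          mul_le_mul_of_nonneg_right abs_sin_le_abs hinv
      _ = |y| / Y - |y| / X := by ring
      _ ≤ (|x| - |y|) / X := by rw [sub_div]; linarith
      _ ≤ d / X := div_le_div_of_nonneg_right hxy hX.le
  rw [hsplit]
  linarith [abs_sub ((sin x - sin y) / X) (sin y * (1 / Y - 1 / X))]

lemma abs_sinKernel_sub_le (hα0 : 0 ≤ α) (hα1 : 2 * α < 1) (x y : ℝ) :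
    |sinKernel α x - sinKernel α y| ≤ 2 * |x - y| ^ (1 - 2 * α) := by
  rcases le_total |y| |x| with hyx | hxy
  · exact abs_sinKernel_sub_le_of_abs_le hα0 hα1 hyx
  · rw [abs_sub_comm, abs_sub_comm x]
    exact abs_sinKernel_sub_le_of_abs_le hα0 hα1 hxy

lemma abs_sinKernel_sub_le_of_near_pi (hα0 : 0 ≤ α) {x y d : ℝ}
    (hx : |x| ≤ π) (hy : |y| ≤ π) (hxyd : (π - |x|) + (π - |y|) ≤ d) (hd : d ≤ 1) :
    |sinKernel α x - sinKernel α y| ≤ d ^ (1 - 2 * α) := by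
  have hπ := pi_gt_three
  calc |sinKernel α x - sinKernel α y| ≤ |sinKernel α x| + |sinKernel α y| := abs_sub _ _
    _ ≤ (π - |x|) + (π - |y|) :=
        add_le_add (abs_sinKernel_le_pi_sub hα0 (by linarith) hx)
          (abs_sinKernel_le_pi_sub hα0 (by linarith) hy)
    _ ≤ d := hxyd
    _ ≤ d ^ (1 - 2 * α) := self_le_rpow_of_le_one (by linarith) hd (by linarith)

lemma abs_sinKernel_rep_le_pi (hα0 : 0 ≤ α) (hα1 : 2 * α < 1) (θ : ℝ) :
    |sinKernel α (rep θ)| ≤ π :=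
  calc |sinKernel α (rep θ)| ≤ |rep θ| ^ (1 - 2 * α) := abs_sinKernel_le_rpow _
    _ ≤ π ^ (1 - 2 * α) := rpow_le_rpow (abs_nonneg _) (abs_rep_le_pi θ) (by linarith)
    _ ≤ π := rpow_le_self_of_one_le (by linarith [pi_gt_three]) (by linarith)

theorem stmt0_general (α : ℝ) (hα : α ∈ Set.Ioo (0:ℝ) (1/2)) (θ₁ θ₂ : ℝ) :
    |hker α θ₁ - hker α θ₂| ≤ Real.cosh Real.pi * |θ₁ - θ₂| ^ (1 - 2 * α) := by
  have hα0 : 0 ≤ α := hα.1.le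
  have hα1 : 2 * α < 1 := by linarith [hα.2]
  have hcosh : 2 ≤ cosh π := by linarith [two_pi_le_cosh_pi, pi_gt_three]
  rw [hker_eq_sinKernel_rep, hker_eq_sinKernel_rep]
  rcases le_or_gt 1 |θ₁ - θ₂| with hfar | hnear
  · calc |sinKernel α (rep θ₁) - sinKernel α (rep θ₂)|
          ≤ |sinKernel α (rep θ₁)| + |sinKernel α (rep θ₂)| := abs_sub _ _
      _ ≤ 2 * π := by
          linarith [abs_sinKernel_rep_le_pi hα0 hα1 θ₁, abs_sinKernel_rep_le_pi hα0 hα1 θ₂]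
      _ ≤ cosh π * 1 := by linarith [two_pi_le_cosh_pi]
      _ ≤ cosh π * |θ₁ - θ₂| ^ (1 - 2 * α) := by
          gcongr; exact one_le_rpow hfar (by linarith)
  have hpow : 0 ≤ |θ₁ - θ₂| ^ (1 - 2 * α) := rpow_nonneg (abs_nonneg _) _
  rcases rep_sub_rep_eq_or_pi_sub_add_pi_sub_le θ₁ θ₂ with hrep | hwrap
  · calc _ ≤ 2 * |rep θ₁ - rep θ₂| ^ (1 - 2 * α) := abs_sinKernel_sub_le hα0 hα1 _ _
      _ ≤ cosh π * |θ₁ - θ₂| ^ (1 - 2 * α) := by rw [hrep]; gcongr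
  · calc _ ≤ |θ₁ - θ₂| ^ (1 - 2 * α) := abs_sinKernel_sub_le_of_near_pi hα0
          (abs_rep_le_pi θ₁) (abs_rep_le_pi θ₂) hwrap hnear.le
      _ ≤ cosh π * |θ₁ - θ₂| ^ (1 - 2 * α) := le_mul_of_one_le_left hpow (by linarith)

/-- For `α ∈ (0,1/2)`, the kernel `h` is `(1-2α)`-Hölder continuous:
`|h(θ₁) - h(θ₂)| ≤ cosh(π) · |θ₁ - θ₂|^{1-2α}` whenever `θ₁ - θ₂ ∈ (-π, π]`. -/
theorem stmt0 (α : ℝ) (hα : α ∈ Set.Ioo (0:ℝ) (1/2)) (θ₁ θ₂ : ℝ)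
    (hθ : θ₁ - θ₂ ∈ Set.Ioc (-Real.pi) Real.pi) :
    |hker α θ₁ - hker α θ₂| ≤ Real.cosh Real.pi * |θ₁ - θ₂| ^ (1 - 2 * α) :=
  stmt0_general α hα θ₁ θ₂
end

section
/- For α ∈ (0,1/2), the function -h(θ) = -sin(θ)/|θ|_o^{2α} is one-sided Lipschitz on [-2π, 2π]: there exists L₀ > 0 such that ((-h)(θ₁) - (-h)(θ₂))(θ₁ - θ₂) ≤ L₀(θ₁ - θ₂)² for all θ₁, θ₂ ∈ [-2π, 2π]. -/
/- ### Auxiliary material -/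

noncomputable def Lc (α : ℝ) : ℝ := 2 * (1 + (Real.sqrt (2 * (1 - 2*α)))⁻¹)

lemma c_pos {α : ℝ} (hα2 : α < 1/2) : 0 < Real.sqrt (2*(1-2*α)) :=
  Real.sqrt_pos.mpr (by linarith)

lemma Lc_pos {α : ℝ} (hα2 : α < 1/2) : 0 < Lc α := by
  have h := c_pos hα2
  have : 0 < (Real.sqrt (2*(1-2*α)))⁻¹ := inv_pos.mpr h
  unfold Lc; linarith

lemma key {α u : ℝ} (hα1 : 0 < α) (hα2 : α < 1/2) (hu0 : 0 < u) (huπ : u ≤ Real.pi) :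
    -(Lc α) ≤ Real.cos u * u ^ (-(2*α)) - Real.sin u * (2*α * u ^ (-(2*α) - 1)) := by
  set c := Real.sqrt (2*(1-2*α)) with hc_def
  have hc : 0 < c := c_pos hα2
  have hcsq : c^2 = 2*(1-2*α) := Real.sq_sqrt (by linarith)
  have hpow_pos : (0:ℝ) < u ^ (-(2*α)) := Real.rpow_pos_of_pos hu0 _
  have hsplit : u ^ (-(2*α) - 1) = u ^ (-(2*α)) / u := by
    rw [Real.rpow_sub hu0, Real.rpow_one]
  have hsin0 : 0 ≤ Real.sin u := Real.sin_nonneg_of_nonneg_of_le_pi hu0.le huπ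
  have hsinle : Real.sin u ≤ u := Real.sin_le hu0.le
  have hcos1 : Real.cos u ≤ 1 := Real.cos_le_one u
  have hcosm1 : -1 ≤ Real.cos u := Real.neg_one_le_cos u
  have hquad : 1 - u^2/2 ≤ Real.cos u := Real.one_sub_sq_div_two_le_cos
  have hratio1 : Real.sin u / u ≤ 1 := by rw [div_le_one hu0]; exact hsinle
  have hratio0 : 0 ≤ Real.sin u / u := div_nonneg hsin0 hu0.le
  have hL : 0 < Lc α := Lc_pos hα2
  have hE : Real.cos u * u ^ (-(2*α)) - Real.sin u * (2*α * u ^ (-(2*α) - 1))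
      = u ^ (-(2*α)) * (Real.cos u - 2*α * (Real.sin u / u)) := by
    rw [hsplit]; field_simp
  rw [hE]
  set B := Real.cos u - 2*α * (Real.sin u / u) with hB_def
  have h2a : 2*α*(Real.sin u/u) ≤ 2*α := mul_le_of_le_one_right (by linarith) hratio1
  have hr : 2*α*(Real.sin u/u) ≤ 1 := by nlinarith
  rcases le_or_gt 0 B with hB | hB
  · nlinarith [mul_nonneg hpow_pos.le hB]
  · have hcos : Real.cos u < 2*α := by simp only [hB_def] at hB; linarith
    have huc : c < u := by
      by_contra hcon
      push_neg at hcon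
      have : u^2 ≤ c^2 := pow_le_pow_left₀ hu0.le hcon 2
      nlinarith
    have hBge : -2 ≤ B := by simp only [hB_def]; linarith
    have hpow_le : u ^ (-(2*α)) ≤ 1 + c⁻¹ := by
      have hcinv : 0 < c⁻¹ := inv_pos.mpr hc
      rcases le_or_gt 1 u with h1 | h1
      · have := Real.rpow_le_one_of_one_le_of_nonpos h1 (by linarith : -(2*α) ≤ 0)
        linarith
      · have h2 : u ^ (-(2*α)) ≤ u ^ (-1:ℝ) :=
          Real.rpow_le_rpow_of_exponent_ge hu0 h1.le (by linarith)
        rw [Real.rpow_neg_one] at h2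
        have h3 : u⁻¹ ≤ c⁻¹ := inv_anti₀ hc huc.le
        linarith
    have hmul : (1 + c⁻¹) * B ≤ u ^ (-(2*α)) * B :=
      mul_le_mul_of_nonpos_right hpow_le hB.le
    have hLc : Lc α = 2*(1 + c⁻¹) := rfl
    nlinarith

lemma aux_antitone {α : ℝ} (hα1 : 0 < α) (hα2 : α < 1/2) (a b : ℝ) (hb : b = 1 ∨ b = -1)
    (hsin : ∀ θ : ℝ, Real.sin θ = b * Real.sin (a + b*θ))
    (hcos : ∀ θ : ℝ, Real.cos θ = Real.cos (a + b*θ))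
    {S : Set ℝ} (hS : Convex ℝ S)
    (hpos : ∀ θ ∈ S, 0 < a + b*θ) (hle : ∀ θ ∈ S, a + b*θ ≤ Real.pi) :
    AntitoneOn (fun θ => -(Real.sin θ * (a + b*θ) ^ (-(2*α))) - Lc α * θ) S := by
  have hderiv : ∀ θ ∈ S, HasDerivAt (fun θ => -(Real.sin θ * (a + b*θ) ^ (-(2*α))) - Lc α * θ)
      (-(Real.cos θ * (a + b*θ) ^ (-(2*α)) +
         Real.sin θ * (b * (-(2*α)) * (a + b*θ) ^ (-(2*α) - 1))) - Lc α) θ := by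
    intro θ hθ
    have hd : HasDerivAt (fun θ : ℝ => a + b*θ) b θ := by
      simpa using ((hasDerivAt_id θ).const_mul b).const_add a
    have hpow : HasDerivAt (fun θ : ℝ => (a + b*θ) ^ (-(2*α)))
        (b * (-(2*α)) * (a + b*θ) ^ (-(2*α) - 1)) θ :=
      hd.rpow_const (Or.inl (hpos θ hθ).ne')
    have hmul := (Real.hasDerivAt_sin θ).mul hpow
    have hLd : HasDerivAt (fun θ : ℝ => Lc α * θ) (Lc α) θ := by
      simpa using (hasDerivAt_id θ).const_mul (Lc α)
    exact hmul.neg.sub hLd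
  apply antitoneOn_of_deriv_nonpos hS
  · intro θ hθ
    exact ((hderiv θ hθ).continuousAt).continuousWithinAt
  · intro θ hθ
    exact ((hderiv θ (interior_subset hθ)).differentiableAt).differentiableWithinAt
  · intro θ hθ
    have hθS : θ ∈ S := interior_subset hθ
    rw [(hderiv θ hθS).deriv]
    have hkey := key hα1 hα2 (hpos θ hθS) (hle θ hθS)
    rw [hcos θ, hsin θ]
    rcases hb with rfl | rfl <;> nlinarith [hkey]

lemma antitoneOn_Icc_of_Ioc {f : ℝ → ℝ} {a b : ℝ}
    (h1 : AntitoneOn f (Set.Ioc a b)) (h2 : ∀ x ∈ Set.Ioc a b, f x ≤ f a) :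
    AntitoneOn f (Set.Icc a b) := by
  intro x hx y hy hxy
  rcases eq_or_lt_of_le hx.1 with heq | hax
  · rcases eq_or_lt_of_le hxy with rfl | hxy'
    · exact le_rfl
    · rw [← heq]; exact h2 y ⟨heq ▸ hxy', hy.2⟩
  · exact h1 ⟨hax, hx.2⟩ ⟨hax.trans_le hxy, hy.2⟩ hxy

lemma antitoneOn_Icc_of_Ico {f : ℝ → ℝ} {a b : ℝ}
    (h1 : AntitoneOn f (Set.Ico a b)) (h2 : ∀ x ∈ Set.Ico a b, f b ≤ f x) :
    AntitoneOn f (Set.Icc a b) := by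
  intro x hx y hy hxy
  rcases eq_or_lt_of_le hy.2 with heq | hyb
  · rcases eq_or_lt_of_le hxy with rfl | hxy'
    · exact le_rfl
    · rw [heq]; exact h2 x ⟨hx.1, heq ▸ hxy'⟩
  · exact h1 ⟨hx.1, lt_of_le_of_lt hxy hyb⟩ ⟨hy.1, hyb⟩ hxy

lemma antitone_glue {f : ℝ → ℝ} {a b c : ℝ} (hab : a ≤ b) (hbc : b ≤ c)
    (h1 : AntitoneOn f (Set.Icc a b)) (h2 : AntitoneOn f (Set.Icc b c)) :
    AntitoneOn f (Set.Icc a c) := by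
  intro x hx y hy hxy
  rcases le_total y b with hyb | hby
  · exact h1 ⟨hx.1, hxy.trans hyb⟩ ⟨hy.1, hyb⟩ hxy
  rcases le_total b x with hbx | hxb
  · exact h2 ⟨hbx, hx.2⟩ ⟨hby, hy.2⟩ hxy
  calc f y ≤ f b := h2 ⟨le_rfl, hbc⟩ ⟨hby, hy.2⟩ hby
    _ ≤ f x := h1 ⟨hx.1, hxb⟩ ⟨hab, le_rfl⟩ hxb

lemma antitoneOn_congr {f g : ℝ → ℝ} {s : Set ℝ} (hf : AntitoneOn f s)
    (h : Set.EqOn g f s) : AntitoneOn g s := fun x hx y hy hxy => by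
  rw [h hx, h hy]; exact hf hx hy hxy

lemma rep_eq_self {θ : ℝ} (h1 : -Real.pi < θ) (h2 : θ ≤ Real.pi) : rep θ = θ := by
  rw [rep, toIocMod_eq_self]
  exact ⟨h1, by linarith⟩

lemma rep_add (θ : ℝ) : rep (θ + 2 * Real.pi) = rep θ :=
  toIocMod_add_right Real.two_pi_pos _ _

lemma ortho_eq₁ {θ : ℝ} (h1 : 0 ≤ θ) (h2 : θ ≤ Real.pi) : ortho θ = θ := by
  have hπ := Real.pi_pos
  rw [ortho, rep_eq_self (by linarith) h2, abs_of_nonneg h1]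

lemma ortho_eq₃ {θ : ℝ} (h1 : -Real.pi ≤ θ) (h2 : θ ≤ 0) : ortho θ = -θ := by
  have hπ := Real.pi_pos
  rcases eq_or_lt_of_le h1 with heq | hlt
  · rw [ortho, ← heq, show -Real.pi = -Real.pi + 2*Real.pi - 2*Real.pi by ring]
    rw [show -Real.pi + 2*Real.pi - 2*Real.pi = Real.pi - 2*Real.pi by ring]
    have : rep (Real.pi - 2*Real.pi) = rep Real.pi := by
      rw [← rep_add (Real.pi - 2*Real.pi)]; ring_nf
    rw [this, rep_eq_self (by linarith) le_rfl, abs_of_nonneg hπ.le]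
    linarith [heq]
  · rw [ortho, rep_eq_self hlt (by linarith), abs_of_nonpos h2]

lemma ortho_eq₂ {θ : ℝ} (h1 : Real.pi ≤ θ) (h2 : θ ≤ 2 * Real.pi) : ortho θ = 2*Real.pi - θ := by
  have hπ := Real.pi_pos
  have : ortho θ = ortho (θ - 2*Real.pi) := by
    rw [ortho, ortho, ← rep_add (θ - 2*Real.pi)]; ring_nf
  rw [this, ortho_eq₃ (by linarith) (by linarith)]
  ring

lemma ortho_eq₄ {θ : ℝ} (h1 : -(2*Real.pi) ≤ θ) (h2 : θ ≤ -Real.pi) : ortho θ = 2*Real.pi + θ := by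
  have hπ := Real.pi_pos
  have : ortho θ = ortho (θ + 2*Real.pi) := by rw [ortho, ortho, rep_add]
  rw [this, ortho_eq₁ (by linarith) (by linarith)]
  ring

/-- For `α ∈ (0,1/2)`, `-h` is one-sided Lipschitz on `[-2π, 2π]`: there is `L₀ > 0`
with `((-h)(θ₁) - (-h)(θ₂))(θ₁ - θ₂) ≤ L₀ (θ₁ - θ₂)²` for all `θ₁, θ₂ ∈ [-2π, 2π]`. -/
theorem stmt5 (α : ℝ) (hα : α ∈ Set.Ioo (0:ℝ) (1/2)) :
    ∃ L₀ > (0:ℝ), ∀ θ₁ ∈ Set.Icc (-(2 * Real.pi)) (2 * Real.pi),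
      ∀ θ₂ ∈ Set.Icc (-(2 * Real.pi)) (2 * Real.pi),
      ((-hker α θ₁) - (-hker α θ₂)) * (θ₁ - θ₂) ≤ L₀ * (θ₁ - θ₂) ^ 2 := by
  obtain ⟨hα1, hα2⟩ := hα
  have hπ := Real.pi_pos
  have hL : 0 < Lc α := Lc_pos hα2
  refine ⟨Lc α, hL, ?_⟩
  set g : ℝ → ℝ := fun θ => -hker α θ - Lc α * θ with hg_def
  -- Piece 1 : [0, π]
  have anti1 : AntitoneOn g (Set.Icc 0 Real.pi) := by
    have hf := aux_antitone hα1 hα2 0 1 (Or.inl rfl)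
        (fun θ => by norm_num) (fun θ => by norm_num)
        (convex_Ioc 0 Real.pi)
        (fun θ hθ => by simpa using hθ.1) (fun θ hθ => by simpa using hθ.2)
    have hIcc := antitoneOn_Icc_of_Ioc hf (by
      intro x hx
      have hs : 0 ≤ Real.sin x := Real.sin_nonneg_of_nonneg_of_le_pi hx.1.le hx.2
      have hp : (0:ℝ) < (0 + 1*x) ^ (-(2*α)) := Real.rpow_pos_of_pos (by linarith [hx.1]) _
      have h0 : Real.sin 0 = 0 := Real.sin_zero
      rw [h0]
      have hx0 := hx.1
      nlinarith [mul_nonneg hs hp.le])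
    apply antitoneOn_congr hIcc
    intro θ hθ
    simp only [hg_def]
    rw [hker, ortho_eq₁ hθ.1 hθ.2, show (0:ℝ) + 1*θ = θ from by ring,
      Real.rpow_neg hθ.1, div_eq_mul_inv]
  -- Piece 2 : [π, 2π]
  have anti2 : AntitoneOn g (Set.Icc Real.pi (2*Real.pi)) := by
    have hf := aux_antitone hα1 hα2 (2*Real.pi) (-1) (Or.inr rfl)
        (fun θ => by
          rw [show 2*Real.pi + (-1)*θ = -(θ - 2*Real.pi) by ring, Real.sin_neg,
            Real.sin_sub_two_pi]; ring)
        (fun θ => by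
          rw [show 2*Real.pi + (-1)*θ = -(θ - 2*Real.pi) by ring, Real.cos_neg,
            Real.cos_sub_two_pi])
        (convex_Ico Real.pi (2*Real.pi))
        (fun θ hθ => by linarith [hθ.2]) (fun θ hθ => by linarith [hθ.1])
    have hIcc := antitoneOn_Icc_of_Ico hf (by
      intro x hx
      have hs : Real.sin x ≤ 0 := by
        rw [← Real.sin_sub_two_pi]
        exact Real.sin_nonpos_of_nonpos_of_neg_pi_le (by linarith [hx.2]) (by linarith [hx.1])
      have hp : (0:ℝ) < (2*Real.pi + (-1)*x) ^ (-(2*α)) :=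
        Real.rpow_pos_of_pos (by linarith [hx.2]) _
      have h0 : Real.sin (2*Real.pi) = 0 := Real.sin_two_pi
      rw [h0]
      have hx2 := hx.2
      nlinarith [mul_nonpos_of_nonpos_of_nonneg hs hp.le])
    apply antitoneOn_congr hIcc
    intro θ hθ
    simp only [hg_def]
    rw [hker, ortho_eq₂ hθ.1 hθ.2, show 2*Real.pi + (-1)*θ = 2*Real.pi - θ from by ring,
      Real.rpow_neg (by linarith [hθ.2] : (0:ℝ) ≤ 2*Real.pi - θ), div_eq_mul_inv]
  -- Piece 3 : [-π, 0]
  have anti3 : AntitoneOn g (Set.Icc (-Real.pi) 0) := by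
    have hf := aux_antitone hα1 hα2 0 (-1) (Or.inr rfl)
        (fun θ => by rw [show (0:ℝ) + (-1)*θ = -θ by ring, Real.sin_neg]; ring)
        (fun θ => by rw [show (0:ℝ) + (-1)*θ = -θ by ring, Real.cos_neg])
        (convex_Ico (-Real.pi) 0)
        (fun θ hθ => by linarith [hθ.2]) (fun θ hθ => by linarith [hθ.1])
    have hIcc := antitoneOn_Icc_of_Ico hf (by
      intro x hx
      have hs : Real.sin x ≤ 0 :=
        Real.sin_nonpos_of_nonpos_of_neg_pi_le hx.2.le hx.1
      have hp : (0:ℝ) < (0 + (-1)*x) ^ (-(2*α)) :=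
        Real.rpow_pos_of_pos (by linarith [hx.2]) _
      have h0 : Real.sin 0 = 0 := Real.sin_zero
      rw [h0]
      have hx2 := hx.2
      nlinarith [mul_nonpos_of_nonpos_of_nonneg hs hp.le])
    apply antitoneOn_congr hIcc
    intro θ hθ
    simp only [hg_def]
    rw [hker, ortho_eq₃ hθ.1 hθ.2, show (0:ℝ) + (-1)*θ = -θ from by ring,
      Real.rpow_neg (by linarith [hθ.2] : (0:ℝ) ≤ -θ), div_eq_mul_inv]
  -- Piece 4 : [-2π, -π]
  have anti4 : AntitoneOn g (Set.Icc (-(2*Real.pi)) (-Real.pi)) := by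
    have hf := aux_antitone hα1 hα2 (2*Real.pi) 1 (Or.inl rfl)
        (fun θ => by
          rw [show 2*Real.pi + 1*θ = θ + 2*Real.pi by ring, Real.sin_add_two_pi]; ring)
        (fun θ => by
          rw [show 2*Real.pi + 1*θ = θ + 2*Real.pi by ring, Real.cos_add_two_pi])
        (convex_Ioc (-(2*Real.pi)) (-Real.pi))
        (fun θ hθ => by linarith [hθ.1]) (fun θ hθ => by linarith [hθ.2])
    have hIcc := antitoneOn_Icc_of_Ioc hf (by
      intro x hx
      have hs : 0 ≤ Real.sin x := by
        rw [← Real.sin_add_two_pi]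
        exact Real.sin_nonneg_of_nonneg_of_le_pi (by linarith [hx.1]) (by linarith [hx.2])
      have hp : (0:ℝ) < (2*Real.pi + 1*x) ^ (-(2*α)) :=
        Real.rpow_pos_of_pos (by linarith [hx.1]) _
      have h0 : Real.sin (-(2*Real.pi)) = 0 := by
        rw [Real.sin_neg, Real.sin_two_pi, neg_zero]
      rw [h0]
      have hx1 := hx.1
      nlinarith [mul_nonneg hs hp.le])
    apply antitoneOn_congr hIcc
    intro θ hθ
    simp only [hg_def]
    rw [hker, ortho_eq₄ hθ.1 hθ.2, show 2*Real.pi + 1*θ = 2*Real.pi + θ from by ring,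
      Real.rpow_neg (by linarith [hθ.1] : (0:ℝ) ≤ 2*Real.pi + θ), div_eq_mul_inv]
  -- Glue
  have hganti : AntitoneOn g (Set.Icc (-(2*Real.pi)) (2*Real.pi)) := by
    have hleft : AntitoneOn g (Set.Icc (-(2*Real.pi)) 0) :=
      antitone_glue (by linarith) (by linarith) anti4 anti3
    have hright : AntitoneOn g (Set.Icc 0 (2*Real.pi)) :=
      antitone_glue (by linarith) (by linarith) anti1 anti2
    exact antitone_glue (by linarith) (by linarith) hleft hright
  intro θ₁ h₁ θ₂ h₂
  rcases le_total θ₁ θ₂ with h | h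
  · have hg := hganti h₁ h₂ h
    simp only [hg_def] at hg
    nlinarith [mul_nonneg (sub_nonneg.mpr hg) (sub_nonneg.mpr h)]
  · have hg := hganti h₂ h₁ h
    simp only [hg_def] at hg
    nlinarith [mul_nonneg (sub_nonneg.mpr hg) (sub_nonneg.mpr h)]
end

section
/- Let Φ: D₁ → D₂ be a C¹ diffeomorphism between open subsets of ℝ^d and F: D₂ → ℝ^d a measurable vector field. Then the Filippov set-valued maps satisfy K[F ∘ Φ](x) = K[F](Φ(x)) for every x ∈ D₁. -/
open MeasureTheory

/-- The Filippov set-valued map of a vector field `F` on a domain `D ⊆ ℝ^d`: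
`K[F](x) := ⋂_{δ>0} ⋂_{|N|=0} cl conv F((B_δ(x) ∩ D) \ N)`, the intersection running
over Lebesgue-negligible sets `N`. -/
noncomputable def Filippov {d : ℕ} (D : Set (EuclideanSpace ℝ (Fin d)))
    (F : EuclideanSpace ℝ (Fin d) → EuclideanSpace ℝ (Fin d))
    (x : EuclideanSpace ℝ (Fin d)) : Set (EuclideanSpace ℝ (Fin d)) :=
  ⋂ (δ : ℝ) (_ : 0 < δ), ⋂ (N : Set (EuclideanSpace ℝ (Fin d))) (_ : volume N = 0),
    closure (convexHull ℝ (F '' ((Metric.ball x δ ∩ D) \ N)))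

/-! Both inclusions come from one: if `Φ` is continuous at `x` within `D₁` and its preimages
of null sets are null, then `K[F ∘ Φ](x) ⊆ K[F](Φ x)`, because a ball around `x` minus a null
set is mapped into a prescribed ball around `Φ x` minus a prescribed null set. Preimages of
null sets under `Φ` are images under the differentiable inverse `Ψ`, hence null. The reverse
inclusion is the same statement for `Ψ` applied to `F ∘ Φ`, which agrees with `F ∘ Φ ∘ Ψ = F`
on `D₂`. -/

lemma measure_inter_preimage_eq_zero_of_leftInvOn {E : Type*} [NormedAddCommGroup E]
    [NormedSpace ℝ E] [FiniteDimensional ℝ E] [MeasurableSpace E] [BorelSpace E]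
    (μ : Measure E) [μ.IsAddHaarMeasure] {D₁ D₂ N : Set E} {Φ Ψ : E → E}
    (hΨ : DifferentiableOn ℝ Ψ D₂) (hmaps : Set.MapsTo Φ D₁ D₂) (hinv : Set.LeftInvOn Ψ Φ D₁)
    (hN : μ N = 0) : μ (D₁ ∩ Φ ⁻¹' N) = 0 := by
  have hsub : D₁ ∩ Φ ⁻¹' N ⊆ Ψ '' (N ∩ D₂) :=
    fun y ⟨hyD, hyN⟩ => ⟨Φ y, ⟨hyN, hmaps hyD⟩, hinv hyD⟩
  refine measure_mono_null hsub ?_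
  exact addHaar_image_eq_zero_of_differentiableOn_of_addHaar_eq_zero μ
    (hΨ.mono Set.inter_subset_right) (measure_mono_null Set.inter_subset_left hN)

lemma filippov_congr {d : ℕ} {D : Set (EuclideanSpace ℝ (Fin d))}
    {F G : EuclideanSpace ℝ (Fin d) → EuclideanSpace ℝ (Fin d)} (hFG : Set.EqOn F G D)
    (x : EuclideanSpace ℝ (Fin d)) : Filippov D F x = Filippov D G x := by
  have himage : ∀ δ N, F '' ((Metric.ball x δ ∩ D) \ N) = G '' ((Metric.ball x δ ∩ D) \ N) :=
    fun δ N => Set.EqOn.image_eq fun y hy => hFG hy.1.2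
  simp only [Filippov, himage]

lemma filippov_comp_subset {d : ℕ} {D₁ D₂ : Set (EuclideanSpace ℝ (Fin d))}
    {Φ : EuclideanSpace ℝ (Fin d) → EuclideanSpace ℝ (Fin d)} {x : EuclideanSpace ℝ (Fin d)}
    (hΦ : ContinuousWithinAt Φ D₁ x) (hmaps : Set.MapsTo Φ D₁ D₂)
    (hnull : ∀ N, volume N = 0 → volume (D₁ ∩ Φ ⁻¹' N) = 0)
    (F : EuclideanSpace ℝ (Fin d) → EuclideanSpace ℝ (Fin d)) :
    Filippov D₁ (F ∘ Φ) x ⊆ Filippov D₂ F (Φ x) := by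
  simp only [Filippov, Set.subset_iInter_iff]
  intro δ hδ N hN
  obtain ⟨δ', hδ', hball⟩ := Metric.continuousWithinAt_iff.mp hΦ δ hδ
  have hsub : (F ∘ Φ) '' ((Metric.ball x δ' ∩ D₁) \ (D₁ ∩ Φ ⁻¹' N)) ⊆
      F '' ((Metric.ball (Φ x) δ ∩ D₂) \ N) := by
    rintro _ ⟨y, ⟨⟨hyx, hyD⟩, hyN⟩, rfl⟩
    exact ⟨Φ y, ⟨⟨hball hyD hyx, hmaps hyD⟩, fun hΦyN => hyN ⟨hyD, hΦyN⟩⟩, rfl⟩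
  exact Set.iInter₂_subset_of_subset δ' hδ' <|
    Set.iInter₂_subset_of_subset _ (hnull N hN) (closure_mono (convexHull_mono hsub))

theorem stmt7_general {d : ℕ} (D₁ D₂ : Set (EuclideanSpace ℝ (Fin d)))
    (Φ Ψ : EuclideanSpace ℝ (Fin d) → EuclideanSpace ℝ (Fin d))
    (hΦ : ContDiffOn ℝ 1 Φ D₁) (hΨ : ContDiffOn ℝ 1 Ψ D₂)
    (hmaps : Set.MapsTo Φ D₁ D₂) (hmaps' : Set.MapsTo Ψ D₂ D₁)
    (hinv : ∀ x ∈ D₁, Ψ (Φ x) = x) (hinv' : ∀ y ∈ D₂, Φ (Ψ y) = y)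
    (F : EuclideanSpace ℝ (Fin d) → EuclideanSpace ℝ (Fin d)) :
    ∀ x ∈ D₁, Filippov D₁ (F ∘ Φ) x = Filippov D₂ F (Φ x) := by
  intro x hx
  have hΦnull := fun N => measure_inter_preimage_eq_zero_of_leftInvOn volume
    (hΨ.differentiableOn one_ne_zero) hmaps hinv (N := N)
  have hΨnull := fun N => measure_inter_preimage_eq_zero_of_leftInvOn volume
    (hΦ.differentiableOn one_ne_zero) hmaps' hinv' (N := N)
  refine (filippov_comp_subset (hΦ.continuousOn x hx) hmaps hΦnull F).antisymm ?_
  calc Filippov D₂ F (Φ x) = Filippov D₂ ((F ∘ Φ) ∘ Ψ) (Φ x) :=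
        filippov_congr (fun y hy => by simp only [Function.comp_apply, hinv' y hy]) _
    _ ⊆ Filippov D₁ (F ∘ Φ) (Ψ (Φ x)) :=
        filippov_comp_subset (hΨ.continuousOn _ (hmaps hx)) hmaps' hΨnull _
    _ = Filippov D₁ (F ∘ Φ) x := by rw [hinv x hx]

/-- If `Φ : D₁ → D₂` is a `C¹` diffeomorphism between open subsets of `ℝ^d` (with `C¹`
inverse `Ψ`) and `F : D₂ → ℝ^d` is a measurable vector field, then the Filippov
set-valued maps satisfy `K[F ∘ Φ](x) = K[F](Φ(x))` for every `x ∈ D₁`. -/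
theorem stmt7 {d : ℕ} (D₁ D₂ : Set (EuclideanSpace ℝ (Fin d)))
    (hD₁ : IsOpen D₁) (hD₂ : IsOpen D₂)
    (Φ Ψ : EuclideanSpace ℝ (Fin d) → EuclideanSpace ℝ (Fin d))
    (hΦ : ContDiffOn ℝ 1 Φ D₁) (hΨ : ContDiffOn ℝ 1 Ψ D₂)
    (hmaps : Set.MapsTo Φ D₁ D₂) (hmaps' : Set.MapsTo Ψ D₂ D₁)
    (hinv : ∀ x ∈ D₁, Ψ (Φ x) = x) (hinv' : ∀ y ∈ D₂, Φ (Ψ y) = y)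
    (F : EuclideanSpace ℝ (Fin d) → EuclideanSpace ℝ (Fin d)) (hF : Measurable F) :
    ∀ x ∈ D₁, Filippov D₁ (F ∘ Φ) x = Filippov D₂ F (Φ x) :=
  stmt7_general D₁ D₂ Φ Ψ hΦ hΨ hmaps hmaps' hinv hinv' F
end

section
/- Let D ⊆ ℝ^d be open, A: D → M_d(ℝ) continuous, and F: D → ℝ^d locally essentially bounded. Then the Filippov set-valued map of the product satisfies K[AF](x) = A(x)·K[F](x) for every x ∈ D. -/
/-!
`K[G](x)` is the intersection of the closed convex hulls of `G '' s` over the sets `s` of the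
filter `𝓝[D] x ⊓ ae volume`, so it does not change when `G` is perturbed by a function tending
to `0` along that filter. As `F` is essentially bounded near `x` and `A` is continuous at `x`,
`(A y - A x) (F y)` is such a perturbation, whence `K[AF](x) = K[A(x) F](x)`. On a set where `F`
is bounded the closed convex hulls are compact, and a continuous map commutes with directed
intersections of compact sets, so `K[A(x) F](x) = A(x) K[F](x)`.
-/

open MeasureTheory

open Filter Set Topology

theorem Set.image_iInter_of_directed_isCompact {ι X Y : Type*} [Nonempty ι]
    [TopologicalSpace X] [T2Space X] [TopologicalSpace Y] [T1Space Y] {f : X → Y}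
    (hf : Continuous f) {K : ι → Set X} (hd : Directed (· ⊇ ·) K) (hK : ∀ i, IsCompact (K i)) :
    f '' ⋂ i, K i = ⋂ i, f '' K i := by
  refine (image_iInter_subset K f).antisymm fun w hw => ?_
  have hfiber : ∀ i, IsClosed (K i ∩ f ⁻¹' {w}) :=
    fun i => (hK i).isClosed.inter (isClosed_singleton.preimage hf)
  obtain ⟨v, hv⟩ := IsCompact.nonempty_iInter_of_directed_nonempty_isCompact_isClosed
    (fun i => K i ∩ f ⁻¹' {w})
    (fun i j => (hd i j).imp fun k hk => ⟨inter_subset_inter_left _ hk.1,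
      inter_subset_inter_left _ hk.2⟩)
    (fun i => (mem_iInter.1 hw i).imp fun v hv => hv)
    (fun i => (hK i).of_isClosed_subset (hfiber i) inter_subset_left) hfiber
  obtain ⟨i⟩ := ‹Nonempty ι›
  exact ⟨v, mem_iInter.2 fun j => (mem_iInter.1 hv j).1, (mem_iInter.1 hv i).2⟩

section ClosedConvexHullAlong

variable {α E F : Type*} [NormedAddCommGroup E] [NormedSpace ℝ E]
  [NormedAddCommGroup F] [NormedSpace ℝ F]

def closedConvexHullAlong (l : Filter α) (G : α → E) : Set E :=
  ⋂ s ∈ l, closure (convexHull ℝ (G '' s))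

theorem closedConvexHullAlong_subset_of_tendsto_sub {l : Filter α} {G H : α → E}
    (h : Tendsto (fun y => H y - G y) l (𝓝 0)) :
    closedConvexHullAlong l H ⊆ closedConvexHullAlong l G := by
  intro w hw
  simp only [closedConvexHullAlong, mem_iInter₂] at hw ⊢
  intro s hs
  rw [Metric.closure_eq_iInter_cthickening, mem_iInter₂]
  intro r hr
  have hclose : ∀ᶠ y in l, dist (H y) (G y) ≤ r := by
    filter_upwards [Metric.tendsto_nhds.1 h r hr] with y hy
    rw [dist_eq_norm, ← dist_zero_right]
    exact hy.le
  refine closure_minimal (convexHull_min ?_ ((convex_convexHull ℝ _).cthickening r))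
    Metric.isClosed_cthickening (hw _ (inter_mem hs hclose))
  rintro _ ⟨y, ⟨hys, hyr⟩, rfl⟩
  exact Metric.mem_cthickening_of_dist_le _ _ _ _
    (subset_convexHull ℝ _ (mem_image_of_mem G hys)) hyr

theorem closedConvexHullAlong_congr_of_tendsto_sub {l : Filter α} {G H : α → E}
    (h : Tendsto (fun y => H y - G y) l (𝓝 0)) :
    closedConvexHullAlong l H = closedConvexHullAlong l G := by
  refine (closedConvexHullAlong_subset_of_tendsto_sub h).antisymm
    (closedConvexHullAlong_subset_of_tendsto_sub ?_)
  simpa only [neg_sub, neg_zero] using h.neg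

theorem closedConvexHullAlong_eq_iInter_inter {l : Filter α} {G : α → E} {s₀ : Set α}
    (hs₀ : s₀ ∈ l) :
    closedConvexHullAlong l G = ⋂ s : l.sets, closure (convexHull ℝ (G '' (s ∩ s₀))) := by
  refine subset_antisymm (fun w hw => mem_iInter.2 fun s => ?_) (fun w hw => ?_)
  · exact mem_iInter₂.1 hw _ (inter_mem s.2 hs₀)
  · refine mem_iInter₂.2 fun s hs => ?_
    exact closure_mono (convexHull_mono (image_mono inter_subset_left)) (mem_iInter.1 hw ⟨s, hs⟩)

theorem ContinuousLinearMap.image_closure_convexHull_of_isCompact (L : E →L[ℝ] F) {X : Set E}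
    (hX : IsCompact (closure (convexHull ℝ X))) :
    L '' closure (convexHull ℝ X) = closure (convexHull ℝ (L '' X)) := by
  refine subset_antisymm ?_ ?_
  · exact (image_closure_subset_closure_image L.continuous).trans
      (closure_mono (L.toLinearMap.image_convexHull X).subset)
  · refine closure_minimal (convexHull_min (image_mono (subset_convexHull ℝ X |>.trans
      subset_closure)) ((convex_convexHull ℝ X).closure.linear_image L.toLinearMap))
      (hX.image L.continuous).isClosed

theorem closedConvexHullAlong_comp_clm [ProperSpace E] (L : E →L[ℝ] F) {l : Filter α}
    {G : α → E} (hG : IsBoundedUnder (· ≤ ·) l fun y => ‖G y‖) :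
    closedConvexHullAlong l (fun y => L (G y)) = L '' closedConvexHullAlong l G := by
  obtain ⟨C, hC⟩ := hG
  have hs₀ : {y | ‖G y‖ ≤ C} ∈ l := hC
  have hK : ∀ s : Set α, IsCompact (closure (convexHull ℝ (G '' (s ∩ {y | ‖G y‖ ≤ C})))) := by
    intro s
    refine (isBounded_convexHull.2 ((Metric.isBounded_closedBall (x := 0) (r := C)).subset ?_))
      |>.isCompact_closure
    rintro _ ⟨y, ⟨-, hy⟩, rfl⟩
    simpa using hy
  have : Nonempty l.sets := ⟨⟨univ, univ_mem⟩⟩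
  rw [closedConvexHullAlong_eq_iInter_inter hs₀, closedConvexHullAlong_eq_iInter_inter hs₀,
    image_iInter_of_directed_isCompact L.continuous ?_ fun s : l.sets => hK s]
  · simp only [L.image_closure_convexHull_of_isCompact (hK _), image_image]
  · exact fun s t => ⟨⟨s ∩ t, inter_mem s.2 t.2⟩,
      closure_mono (convexHull_mono (image_mono (inter_subset_inter_left _ inter_subset_left))),
      closure_mono (convexHull_mono (image_mono (inter_subset_inter_left _ inter_subset_right)))⟩

end ClosedConvexHullAlong

/-- The sets `(B_δ(x) ∩ D) \ N` form a basis of `𝓝[D] x ⊓ ae volume`. -/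
theorem filippov_eq_closedConvexHullAlong {d : ℕ} (D : Set (EuclideanSpace ℝ (Fin d)))
    (G : EuclideanSpace ℝ (Fin d) → EuclideanSpace ℝ (Fin d)) (x : EuclideanSpace ℝ (Fin d)) :
    Filippov D G x = closedConvexHullAlong (𝓝[D] x ⊓ ae volume) G := by
  refine subset_antisymm (fun w hw => mem_iInter₂.2 fun s hs => ?_) (fun w hw => ?_)
  · obtain ⟨t, ht, u, hu, rfl⟩ := mem_inf_iff.1 hs
    obtain ⟨δ, hδ, hball⟩ := Metric.mem_nhdsWithin_iff.1 ht
    have hS : (Metric.ball x δ ∩ D) \ uᶜ ⊆ t ∩ u := fun y hy => ⟨hball hy.1, not_not.1 hy.2⟩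
    exact closure_mono (convexHull_mono (image_mono hS))
      (mem_iInter₂.1 (mem_iInter₂.1 hw δ hδ) uᶜ (mem_ae_iff.1 hu))
  · refine mem_iInter₂.2 fun δ hδ => mem_iInter₂.2 fun N hN => mem_iInter₂.1 hw _ ?_
    exact inter_mem_inf (Metric.mem_nhdsWithin_iff.2 ⟨δ, hδ, subset_rfl⟩)
      (compl_mem_ae_iff.2 hN)

theorem stmt8_general {d : ℕ} (D : Set (EuclideanSpace ℝ (Fin d)))
    (A : EuclideanSpace ℝ (Fin d) →
      (EuclideanSpace ℝ (Fin d) →L[ℝ] EuclideanSpace ℝ (Fin d)))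
    (hA : ContinuousOn A D)
    (F : EuclideanSpace ℝ (Fin d) → EuclideanSpace ℝ (Fin d))
    (hFbdd : ∀ x ∈ D, ∃ δ > (0:ℝ), ∃ C : ℝ,
      ∀ᵐ y ∂volume, y ∈ Metric.ball x δ ∩ D → ‖F y‖ ≤ C) :
    ∀ x ∈ D, Filippov D (fun y => A y (F y)) x = (fun u => A x u) '' Filippov D F x := by
  intro x hx
  obtain ⟨δ, hδ, C, hC⟩ := hFbdd x hx
  have hF : IsBoundedUnder (· ≤ ·) (𝓝[D] x ⊓ ae volume) fun y => ‖F y‖ :=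
    ⟨C, inter_mem_inf (Metric.mem_nhdsWithin_iff.2 ⟨δ, hδ, subset_rfl⟩) hC |> mem_of_superset <|
      fun y hy => hy.2 hy.1⟩
  have hAx : Tendsto (fun y => A y - A x) (𝓝[D] x ⊓ ae volume) (𝓝 0) :=
    tendsto_sub_nhds_zero_iff.2 ((hA x hx).tendsto.mono_left inf_le_left)
  have hdiff : Tendsto (fun y => A y (F y) - A x (F y)) (𝓝[D] x ⊓ ae volume) (𝓝 0) := by
    simpa only [sub_apply] using
      hAx.op_zero_isBoundedUnder_le hF (fun T v => T v) fun T v => T.le_opNorm v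
  rw [filippov_eq_closedConvexHullAlong, filippov_eq_closedConvexHullAlong,
    closedConvexHullAlong_congr_of_tendsto_sub hdiff, closedConvexHullAlong_comp_clm (A x) hF]

/-- If `D ⊆ ℝ^d` is open, `A : D → M_d(ℝ)` is continuous and `F : D → ℝ^d` is locally
essentially bounded, then `K[AF](x) = A(x) · K[F](x)` for every `x ∈ D`. -/
theorem stmt8 {d : ℕ} (D : Set (EuclideanSpace ℝ (Fin d))) (hD : IsOpen D)
    (A : EuclideanSpace ℝ (Fin d) →
      (EuclideanSpace ℝ (Fin d) →L[ℝ] EuclideanSpace ℝ (Fin d)))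
    (hA : ContinuousOn A D)
    (F : EuclideanSpace ℝ (Fin d) → EuclideanSpace ℝ (Fin d))
    (hFbdd : ∀ x ∈ D, ∃ δ > (0:ℝ), ∃ C : ℝ,
      ∀ᵐ y ∂volume, y ∈ Metric.ball x δ ∩ D → ‖F y‖ ≤ C) :
    ∀ x ∈ D, Filippov D (fun y => A y (F y)) x = (fun u => A x u) '' Filippov D F x :=
  stmt8_general D A hA F hFbdd
end

section
/- Let M be a complete Riemannian manifold, y ∈ M, and d_y²/2 the halved squared distance function to y. Then for every x ∈ M and v ∈ T_x M, the one-sided upper Dini directional derivative satisfies d⁺(½ d_y²)_x(v) ≤ inf { -⟨v, w⟩ : w ∈ exp_x⁻¹(y), |w| = d(x,y) }. -/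
/-!
Compare `exp_x (s • v)` with the point `exp_x ((s * α) • w)` of the minimizing geodesic towards `y`.
Since `exp_x` is `(1 + ε)`-Lipschitz near `0` and the geodesic has length `(1 - s * α) * ‖w‖`
from that point on, `d(exp_x (s • v), y) ≤ ‖w‖ + s * ((1 + ε) * ‖v - α • w‖ - α * ‖w‖)` for small
`s > 0`, so the upper Dini derivative of `½ d_y²` is at most
`((1 + ε) * ‖v - α • w‖ - α * ‖w‖) * ‖w‖`. As `ε → 0` and `α → ∞` this bound tends to `-⟪v, w⟫`,
because `‖w - t • v‖` has derivative `-⟪v, w⟫ / ‖w‖` at `t = 0`.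
-/

/-- Abstract data of a (complete) Riemannian manifold `M` with tangent spaces `T x` and
Riemannian exponential maps `exp x : T x → M`. -/
structure RiemannianExpStruct (M : Type*) [MetricSpace M] (T : M → Type*)
    [∀ x, NormedAddCommGroup (T x)] [∀ x, InnerProductSpace ℝ (T x)] where
  exp : ∀ x : M, T x → M
  exp_zero : ∀ x, exp x 0 = x
  exp_locIso : ∀ x : M, ∀ ε > (0:ℝ), ∃ r > (0:ℝ), ∀ u v : T x, ‖u‖ < r → ‖v‖ < r →
    dist (exp x u) (exp x v) ≤ (1 + ε) * ‖u - v‖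
      ∧ (1 - ε) * ‖u - v‖ ≤ dist (exp x u) (exp x v)
  exp_ray_dist : ∀ (x : M) (w : T x), ‖w‖ = dist x (exp x w) →
    ∀ s t : ℝ, s ∈ Set.Icc (0:ℝ) 1 → t ∈ Set.Icc (0:ℝ) 1 →
      dist (exp x (s • w)) (exp x (t • w)) = |s - t| * ‖w‖

open Filter Topology RealInnerProductSpace

theorem hasDerivAt_norm_sub_smul {V : Type*} [NormedAddCommGroup V] [InnerProductSpace ℝ V]
    (v : V) {w : V} (hw : w ≠ 0) :
    HasDerivAt (fun t : ℝ => ‖w - t • v‖) (-⟪v, w⟫ / ‖w‖) 0 := by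
  have hsq : HasDerivAt (fun t : ℝ => ‖w - t • v‖ ^ 2) (2 * ⟪w, -v⟫) 0 := by
    simpa using ((hasDerivAt_id (0 : ℝ)).smul_const v).const_sub w |>.norm_sq
  convert hsq.sqrt (by simpa using hw) using 1
  · simp [Real.sqrt_sq (norm_nonneg _)]
  · simp [Real.sqrt_sq (norm_nonneg _), inner_neg_right, real_inner_comm]
    ring

theorem tendsto_norm_sub_smul_sub_mul_norm {V : Type*} [NormedAddCommGroup V]
    [InnerProductSpace ℝ V] (v w : V) :
    Tendsto (fun α : ℝ => (‖v - α • w‖ - α * ‖w‖) * ‖w‖) atTop (𝓝 (-⟪v, w⟫)) := by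
  rcases eq_or_ne w 0 with rfl | hw
  · simp
  have hslope := ((hasDerivAt_norm_sub_smul v hw).tendsto_slope_zero_right.comp
    tendsto_inv_atTop_nhdsGT_zero).mul_const ‖w‖
  rw [div_mul_cancel₀ _ (norm_ne_zero_iff.mpr hw)] at hslope
  refine hslope.congr' ?_
  filter_upwards [eventually_gt_atTop 0] with α hα
  have : ‖v - α • w‖ = α * ‖w - α⁻¹ • v‖ := calc
    ‖v - α • w‖ = ‖α • (w - α⁻¹ • v)‖ := by rw [smul_sub, smul_inv_smul₀ hα.ne', norm_sub_rev]
    _ = α * ‖w - α⁻¹ • v‖ := by rw [norm_smul, Real.norm_of_nonneg hα.le]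
  simp [mul_sub, this]

theorem sq_dist_sub_sq_dist_le {X : Type*} [PseudoMetricSpace X] (p q y : X) :
    dist q y ^ 2 - dist p y ^ 2 ≤ 2 * dist p q * dist q y := by
  have h₁ := dist_triangle_left q y p
  have h₂ := dist_triangle p y q
  nlinarith [mul_nonneg (by linarith : 0 ≤ dist p y - dist q y + dist p q)
    (by linarith [dist_comm q y] : 0 ≤ dist p y + dist q y - dist p q), sq_nonneg (dist p q)]

theorem half_sq_sub_half_sq_div_le {D d A s : ℝ} (hD : 0 ≤ D) (hs : 0 < s)
    (h : D ≤ d + s * A) : (D ^ 2 / 2 - d ^ 2 / 2) / s ≤ A * d + s * A ^ 2 / 2 := by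
  rw [div_le_iff₀ hs]
  nlinarith [pow_le_pow_left₀ hD h 2]

namespace RiemannianExpStruct

variable {M : Type*} [MetricSpace M] {T : M → Type*} [∀ x, NormedAddCommGroup (T x)]
  [∀ x, InnerProductSpace ℝ (T x)] (R : RiemannianExpStruct M T)

theorem eventually_dist_exp_smul_le (x : M) (u u' : T x) {ε : ℝ} (hε : 0 < ε) :
    ∀ᶠ s in 𝓝 (0 : ℝ), dist (R.exp x (s • u)) (R.exp x (s • u')) ≤ (1 + ε) * (|s| * ‖u - u'‖) := by
  obtain ⟨r, hr, hlip⟩ := R.exp_locIso x ε hε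
  have hsmall (u : T x) : ∀ᶠ s in 𝓝 (0 : ℝ), ‖s • u‖ < r :=
    ((continuous_id.smul continuous_const).norm.tendsto' 0 0 (by simp)).eventually_lt_const hr
  filter_upwards [hsmall u, hsmall u'] with s hu hu'
  simpa [← smul_sub, norm_smul] using (hlip _ _ hu hu').1

theorem dist_exp_smul_of_minimizing {x : M} {w : T x} (hw : ‖w‖ = dist x (R.exp x w)) {t : ℝ}
    (ht₀ : 0 ≤ t) (ht₁ : t ≤ 1) : dist (R.exp x (t • w)) (R.exp x w) = (1 - t) * ‖w‖ := by
  have := R.exp_ray_dist x w hw t 1 ⟨ht₀, ht₁⟩ ⟨zero_le_one, le_rfl⟩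
  rwa [one_smul, abs_of_nonpos (by linarith), neg_sub] at this

-- Without this lower bound the real `limsup` below could be the junk value of an unbounded `sSup`.
theorem isCoboundedUnder_le_diniQuotient (x y : M) (v : T x) :
    IsCoboundedUnder (· ≤ ·) (𝓝[>] 0)
      (fun s => (dist (R.exp x (s • v)) y ^ 2 / 2 - dist x y ^ 2 / 2) / s) := by
  refine isCoboundedUnder_le_of_eventually_le _ (x := -(2 * ‖v‖ * dist x y)) ?_
  filter_upwards [nhdsWithin_le_nhds (R.eventually_dist_exp_smul_le x v 0 one_pos),
    self_mem_nhdsWithin] with s hlip (hs : 0 < s)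
  rw [smul_zero, R.exp_zero, abs_of_pos hs, sub_zero] at hlip
  rw [le_div_iff₀ hs]
  nlinarith [sq_dist_sub_sq_dist_le (R.exp x (s • v)) x y, dist_nonneg (x := x) (y := y)]

theorem eventually_dist_exp_smul_le_add {x y : M} {w : T x} (hexp : R.exp x w = y)
    (hw : ‖w‖ = dist x y) (v : T x) {α ε : ℝ} (hα : 0 < α) (hε : 0 < ε) :
    ∀ᶠ s in 𝓝[>] 0,
      dist (R.exp x (s • v)) y ≤ ‖w‖ + s * ((1 + ε) * ‖v - α • w‖ - α * ‖w‖) := by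
  filter_upwards [nhdsWithin_le_nhds (R.eventually_dist_exp_smul_le x v (α • w) hε),
    Ioo_mem_nhdsGT (inv_pos.2 hα)] with s hlip ⟨hs₀, hs₁⟩
  have hsα : 0 ≤ s * α ∧ s * α ≤ 1 := ⟨by positivity, (le_div_iff₀ hα).mp (by simpa using hs₁.le)⟩
  have hray := R.dist_exp_smul_of_minimizing (hexp ▸ hw) hsα.1 hsα.2
  rw [hexp] at hray
  rw [smul_smul, abs_of_pos hs₀] at hlip
  calc dist (R.exp x (s • v)) y
      ≤ dist (R.exp x (s • v)) (R.exp x ((s * α) • w)) + dist (R.exp x ((s * α) • w)) y :=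
        dist_triangle _ _ _
    _ ≤ (1 + ε) * (s * ‖v - α • w‖) + (1 - s * α) * ‖w‖ := by rw [hray]; gcongr
    _ = _ := by ring

theorem limsup_diniQuotient_le {x y : M} {w : T x} (hexp : R.exp x w = y)
    (hw : ‖w‖ = dist x y) (v : T x) {α ε : ℝ} (hα : 0 < α) (hε : 0 < ε) :
    limsup (fun s => (dist (R.exp x (s • v)) y ^ 2 / 2 - dist x y ^ 2 / 2) / s) (𝓝[>] 0)
      ≤ ((1 + ε) * ‖v - α • w‖ - α * ‖w‖) * ‖w‖ := by
  set A := (1 + ε) * ‖v - α • w‖ - α * ‖w‖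
  have hlim : Tendsto (fun s => A * ‖w‖ + s * A ^ 2 / 2) (𝓝[>] 0) (𝓝 (A * ‖w‖)) :=
    tendsto_nhdsWithin_of_tendsto_nhds (Continuous.tendsto' (by fun_prop) _ _ (by simp))
  rw [← hlim.limsup_eq]
  refine limsup_le_limsup ?_ (R.isCoboundedUnder_le_diniQuotient x y v) hlim.isBoundedUnder_le
  filter_upwards [R.eventually_dist_exp_smul_le_add hexp hw v hα hε, self_mem_nhdsWithin]
    with s hd (hs : 0 < s)
  rw [← hw]
  exact half_sq_sub_half_sq_div_le dist_nonneg hs hd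

theorem limsup_diniQuotient_le_of_pos {x y : M} {w : T x} (hexp : R.exp x w = y)
    (hw : ‖w‖ = dist x y) (v : T x) {α : ℝ} (hα : 0 < α) :
    limsup (fun s => (dist (R.exp x (s • v)) y ^ 2 / 2 - dist x y ^ 2 / 2) / s) (𝓝[>] 0)
      ≤ (‖v - α • w‖ - α * ‖w‖) * ‖w‖ := by
  have hlim : Tendsto (fun ε : ℝ => ((1 + ε) * ‖v - α • w‖ - α * ‖w‖) * ‖w‖) (𝓝[>] 0)
      (𝓝 ((‖v - α • w‖ - α * ‖w‖) * ‖w‖)) :=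
    tendsto_nhdsWithin_of_tendsto_nhds (Continuous.tendsto' (by fun_prop) _ _ (by simp))
  exact ge_of_tendsto hlim <| eventually_mem_nhdsWithin.mono fun ε hε ↦
    R.limsup_diniQuotient_le hexp hw v hα hε

end RiemannianExpStruct

/-- For every `x ∈ M`, `v ∈ T_x M` and every initial velocity `w` of a minimizing
geodesic from `x` to `y` (i.e. `exp_x w = y` and `|w| = d(x,y)`), the one-sided upper
Dini directional derivative of `½ d_y²` satisfies
`d⁺(½ d_y²)_x(v) ≤ -⟨v, w⟩`; that is, it is bounded by the infimum over all such `w`. -/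
theorem stmt13 {M : Type*} [MetricSpace M] {T : M → Type*}
    [∀ x, NormedAddCommGroup (T x)] [∀ x, InnerProductSpace ℝ (T x)]
    (R : RiemannianExpStruct M T) (x y : M) (v : T x) :
    ∀ w : T x, R.exp x w = y → ‖w‖ = dist x y →
      Filter.limsup
        (fun s => (dist (R.exp x (s • v)) y ^ 2 / 2 - dist x y ^ 2 / 2) / s)
        (nhdsWithin (0:ℝ) (Set.Ioi 0)) ≤ -(inner ℝ v w : ℝ) := by
  intro w hexp hw
  exact ge_of_tendsto (tendsto_norm_sub_smul_sub_mul_norm v w) <|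
    (eventually_gt_atTop 0).mono fun α hα ↦ R.limsup_diniQuotient_le_of_pos hexp hw v hα
end

section
/- For α = 1/2 and ε > 0, let h_ε(θ) = sin(θ)/(ε² + θ²)^{1/2} on (0, π), and let θ̃_ε ∈ (0, π/2) be defined by θ̃_ε tan(θ̃_ε) - θ̃_ε² = ε². Then on (θ̃_ε, π), the derivative satisfies 0 ≤ -h_ε'(θ) ≤ -h'(θ), where h(θ) = sin(θ)/θ; in particular sup_{θ∈(θ̃_ε,π)} |h_ε'(θ)| ≤ -inf_{θ∈(0,π)} h'(θ), a bound independent of ε. -/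
/-- The regularized critical kernel `h_ε(θ) = sin θ / (ε² + θ²)^{1/2}` on `(0, π)`. -/
noncomputable def hepsS (ε θ : ℝ) : ℝ := Real.sin θ / Real.sqrt (ε ^ 2 + θ ^ 2)

/-- The critical kernel `h(θ) = sin θ / θ` on `(0, π)`. -/
noncomputable def hS (θ : ℝ) : ℝ := Real.sin θ / θ

/-!
Writing `-h_ε'(θ) = (ε² + θ²)^{-1/2} (θ sin θ / (ε² + θ²) - cos θ)`, the bracket is
`g(θ) / (ε² + θ²)` with `g(θ) = θ sin θ - (ε² + θ²) cos θ`. The defining equation of `θ̃_ε`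
says `g(θ̃_ε) = 0`, and `g' = (sin θ - θ cos θ) + (ε² + θ²) sin θ ≥ 0` on `[0, π]`, so the
bracket is nonnegative beyond `θ̃_ε`. Comparing factor by factor with
`-h'(θ) = θ⁻¹ (sin θ / θ - cos θ)` then gives `-h_ε' ≤ -h'`, and `-h' ≤ θ / 2` on `(0, π)`
because `sin θ ≤ θ` and `cos θ ≥ 1 - θ² / 2`.
-/

open Real Set

lemma mul_cos_le_sin {t : ℝ} (h0 : 0 ≤ t) (hπ : t ≤ π) : t * cos t ≤ sin t := by
  rcases le_or_gt (cos t) 0 with hcos | hcos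
  · nlinarith [sin_nonneg_of_nonneg_of_le_pi h0 hπ]
  · have ht : t < π / 2 := by
      by_contra! ht
      linarith [cos_nonpos_of_pi_div_two_le_of_le ht (by linarith)]
    have := le_tan h0 ht
    rwa [tan_eq_sin_div_cos, le_div_iff₀ hcos] at this

lemma monotoneOn_mul_sin_sub_mul_cos (ε : ℝ) :
    MonotoneOn (fun t => t * sin t - (ε ^ 2 + t ^ 2) * cos t) (Icc 0 π) := by
  have hderiv : ∀ t, HasDerivAt (fun t => t * sin t - (ε ^ 2 + t ^ 2) * cos t)
      ((sin t - t * cos t) + (ε ^ 2 + t ^ 2) * sin t) t := by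
    intro t
    have h := ((hasDerivAt_id t).mul (hasDerivAt_sin t)).sub
      (((hasDerivAt_pow 2 t).const_add (ε ^ 2)).mul (hasDerivAt_cos t))
    refine h.congr_deriv ?_
    simp only [id_eq]
    ring
  refine monotoneOn_of_hasDerivWithinAt_nonneg (convex_Icc 0 π)
    (by fun_prop) (fun t _ => (hderiv t).hasDerivWithinAt) fun t ht => ?_
  rw [interior_Icc] at ht
  exact add_nonneg (sub_nonneg.2 (mul_cos_le_sin ht.1.le ht.2.le))
    (mul_nonneg (by positivity) (sin_nonneg_of_nonneg_of_le_pi ht.1.le ht.2.le))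

lemma cos_le_mul_sin_div {ε θt θ : ℝ} (hθt : θt ∈ Ioo 0 (π / 2))
    (hdef : θt * tan θt - θt ^ 2 = ε ^ 2) (hθ : θ ∈ Icc θt π) :
    cos θ ≤ θ * sin θ / (ε ^ 2 + θ ^ 2) := by
  have hθ0 : 0 < θ := hθt.1.trans_le hθ.1
  have hcos : 0 < cos θt := cos_pos_of_mem_Ioo ⟨by linarith [hθt.1, pi_pos], hθt.2⟩
  have hroot : θt * sin θt - (ε ^ 2 + θt ^ 2) * cos θt = 0 := by
    rw [tan_eq_sin_div_cos] at hdef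
    field_simp at hdef
    linarith
  have hmono := monotoneOn_mul_sin_sub_mul_cos ε ⟨hθt.1.le, hθ.1.trans hθ.2⟩
    ⟨hθ0.le, hθ.2⟩ hθ.1
  rw [le_div_iff₀ (by positivity)]
  linarith

lemma neg_deriv_hepsS {ε θ : ℝ} (h : 0 < ε ^ 2 + θ ^ 2) :
    -deriv (hepsS ε) θ = (√(ε ^ 2 + θ ^ 2))⁻¹ * (θ * sin θ / (ε ^ 2 + θ ^ 2) - cos θ) := by
  have hsqrt := ((hasDerivAt_pow 2 θ).const_add (ε ^ 2)).sqrt h.ne'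
  have hA : √(ε ^ 2 + θ ^ 2) ≠ 0 := (sqrt_pos.2 h).ne'
  have hd : HasDerivAt (hepsS ε) _ θ := (hasDerivAt_sin θ).div hsqrt hA
  rw [hd.deriv]
  field_simp
  rw [sq_sqrt h.le]
  ring

lemma neg_deriv_hS {θ : ℝ} (hθ : θ ≠ 0) : -deriv hS θ = θ⁻¹ * (sin θ / θ - cos θ) := by
  have hd : HasDerivAt hS _ θ := (hasDerivAt_sin θ).div (hasDerivAt_id θ) hθ
  rw [hd.deriv]
  field_simp
  ring

lemma neg_deriv_hepsS_nonneg {ε θ : ℝ} (hθ : 0 < θ)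
    (hcos : cos θ ≤ θ * sin θ / (ε ^ 2 + θ ^ 2)) : 0 ≤ -deriv (hepsS ε) θ := by
  rw [neg_deriv_hepsS (by positivity)]
  exact mul_nonneg (by positivity) (sub_nonneg.2 hcos)

lemma neg_deriv_hepsS_le_neg_deriv_hS {ε θ : ℝ} (hθ : 0 < θ) (hsin : 0 ≤ sin θ)
    (hcos : cos θ ≤ θ * sin θ / (ε ^ 2 + θ ^ 2)) : -deriv (hepsS ε) θ ≤ -deriv hS θ := by
  have hθ_le : θ ^ 2 ≤ ε ^ 2 + θ ^ 2 := le_add_of_nonneg_left (sq_nonneg ε)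
  rw [neg_deriv_hepsS (by positivity), neg_deriv_hS hθ.ne']
  calc (√(ε ^ 2 + θ ^ 2))⁻¹ * (θ * sin θ / (ε ^ 2 + θ ^ 2) - cos θ)
      ≤ θ⁻¹ * (θ * sin θ / (ε ^ 2 + θ ^ 2) - cos θ) := by
        gcongr
        exact (le_sqrt' hθ).2 hθ_le
    _ ≤ θ⁻¹ * (θ * sin θ / θ ^ 2 - cos θ) := by gcongr
    _ = θ⁻¹ * (sin θ / θ - cos θ) := by field_simp

lemma neg_deriv_hS_le_half {θ : ℝ} (hθ : 0 < θ) : -deriv hS θ ≤ θ / 2 := by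
  rw [neg_deriv_hS hθ.ne']
  calc θ⁻¹ * (sin θ / θ - cos θ) ≤ θ⁻¹ * (1 - (1 - θ ^ 2 / 2)) := by
        gcongr
        · exact div_le_one_of_le₀ (sin_le hθ.le) hθ.le
        · exact one_sub_sq_div_two_le_cos
    _ = θ / 2 := by field_simp; ring

lemma bddAbove_neg_deriv_hS : BddAbove ((fun t => -deriv hS t) '' Ioo 0 π) :=
  ⟨π / 2, by rintro _ ⟨t, ht, rfl⟩; linarith [neg_deriv_hS_le_half ht.1, ht.2]⟩

theorem stmt19_general (ε : ℝ) (θt : ℝ) (hθt : θt ∈ Set.Ioo 0 (Real.pi / 2))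
    (hdef : θt * Real.tan θt - θt ^ 2 = ε ^ 2) :
    (∀ θ ∈ Set.Ioo θt Real.pi,
      0 ≤ -(deriv (hepsS ε) θ) ∧ -(deriv (hepsS ε) θ) ≤ -(deriv hS θ))
    ∧ (∀ θ ∈ Set.Ioo θt Real.pi,
      |deriv (hepsS ε) θ| ≤ sSup ((fun t => -(deriv hS t)) '' Set.Ioo 0 Real.pi)) := by
  have key : ∀ θ ∈ Ioo θt π, 0 ≤ -deriv (hepsS ε) θ ∧ -deriv (hepsS ε) θ ≤ -deriv hS θ := by
    intro θ hθ
    have hθ0 : 0 < θ := hθt.1.trans hθ.1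
    have hcos := cos_le_mul_sin_div hθt hdef (Ioo_subset_Icc_self hθ)
    exact ⟨neg_deriv_hepsS_nonneg hθ0 hcos, neg_deriv_hepsS_le_neg_deriv_hS hθ0
      (sin_nonneg_of_nonneg_of_le_pi hθ0.le hθ.2.le) hcos⟩
  refine ⟨key, fun θ hθ => ?_⟩
  calc |deriv (hepsS ε) θ| = -deriv (hepsS ε) θ := abs_of_nonpos (neg_nonneg.1 (key θ hθ).1)
    _ ≤ -deriv hS θ := (key θ hθ).2
    _ ≤ sSup _ := le_csSup bddAbove_neg_deriv_hS ⟨θ, ⟨hθt.1.trans hθ.1, hθ.2⟩, rfl⟩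

/-- For `α = 1/2`, `ε > 0` and `θ̃_ε ∈ (0, π/2)` defined by
`θ̃_ε tan(θ̃_ε) - θ̃_ε² = ε²`, one has `0 ≤ -h_ε'(θ) ≤ -h'(θ)` on `(θ̃_ε, π)`;
in particular `sup_{(θ̃_ε,π)} |h_ε'| ≤ -inf_{(0,π)} h' = sup_{(0,π)} (-h')`, a bound
independent of `ε`. -/
theorem stmt19 (ε : ℝ) (hε : 0 < ε) (θt : ℝ) (hθt : θt ∈ Set.Ioo 0 (Real.pi / 2))
    (hdef : θt * Real.tan θt - θt ^ 2 = ε ^ 2) :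
    (∀ θ ∈ Set.Ioo θt Real.pi,
      0 ≤ -(deriv (hepsS ε) θ) ∧ -(deriv (hepsS ε) θ) ≤ -(deriv hS θ))
    ∧ (∀ θ ∈ Set.Ioo θt Real.pi,
      |deriv (hepsS ε) θ| ≤ sSup ((fun t => -(deriv hS t)) '' Set.Ioo 0 Real.pi)) :=
  stmt19_general ε θt hθt hdef
end
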